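/- Let $u = u(x_1, x_2, y_1)$ be a smooth function on $\mathbb{R}^4$ independent of $y_2$, with coordinates $(x_1,x_2,y_1,y_2)$, coframe $e^1 = dx_1$, $e^2 = dx_2$, $f^1 = dy_1$, $f^2 = dy_2 - x_1 dx_2$, and let $J_0$ be the almost-complex structure with $J_0 e^i = -f^i$, $J_0 f^i = e^i$ for $i = 1, 2$. Set $\alpha = -J_0 du - u\, e^1$. Then $d\alpha = \sum_{i,j=1}^2 u_{x_i x_j}\, e^i \wedge f^j + u_{x_2 y_1}\, e^1 \wedge e^2 + u_{x_2 y_1}\, f^1 \wedge f^2 + (u_{y_1 y_1} + u_{y_1})\, e^1 \wedge f^1$, and this 2-form is of type $(1,1)$ with respect to $J_0$ (i.e., $d\alpha(J_0 \cdot, J_0 \cdot) = d\alpha(\cdot, \cdot)$). -/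

import Mathlib

noncomputable section

/-- `ℝ⁴` with coordinates `(x₁, x₂, y₁, y₂)` indexed by `0,1,2,3`. -/
abbrev V4 : Type := Fin 4 → ℝ

/-- The coordinate differentials as generators of the exterior algebra of covectors. -/
def ε (i : Fin 4) : ExteriorAlgebra ℝ V4 := ExteriorAlgebra.ι ℝ (Pi.single i 1)

/-- Partial derivative in the `i`-th coordinate direction. -/
def pd (i : Fin 4) (g : V4 → ℝ) (p : V4) : ℝ := fderiv ℝ g p (Pi.single i 1)

/-- Second partial derivative `∂ᵢ∂ⱼ`. -/
def pd2 (i j : Fin 4) (g : V4 → ℝ) : V4 → ℝ := pd i (pd j g)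

/-- Exterior derivative of a 1-form given by its coordinate components. -/
def d1 (a : V4 → Fin 4 → ℝ) (p : V4) : ExteriorAlgebra ℝ V4 :=
  ∑ i, ∑ j, pd i (fun q => a q j) p • (ε i * ε j)

/-- The coframe element `f² = dy₂ - x₁ dx₂` at the point `p`. -/
def f2 (p : V4) : ExteriorAlgebra ℝ V4 := ε 3 - p 0 • ε 1

/-- `J₀` acting on covectors, in coordinate components: `J₀ dx₁ = -dy₁`,
`J₀ dx₂ = x₁ dx₂ - dy₂`, `J₀ dy₁ = dx₁`, `J₀ dy₂ = (1+x₁²) dx₂ - x₁ dy₂`,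
so that `J₀ e¹ = -f¹`, `J₀ e² = -f²`, `J₀ f¹ = e¹`, `J₀ f² = e²`. -/
def J0mat (p : V4) : Matrix (Fin 4) (Fin 4) ℝ :=
  !![0, 0, 1, 0;
     0, p 0, 0, 1 + p 0 ^ 2;
     -1, 0, 0, 0;
     0, -1, 0, -(p 0)]

/-- `J₀` acting on a 1-form given by coordinate components. -/
def J0c (a : V4 → Fin 4 → ℝ) : V4 → Fin 4 → ℝ := fun p => (J0mat p).mulVec (a p)

/-- The coordinate components of `du` of a function `u`. -/
def dc (u : V4 → ℝ) : V4 → Fin 4 → ℝ := fun p j => pd j u p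

lemma eps_sq (i : Fin 4) : ε i * ε i = 0 := ExteriorAlgebra.ι_sq_zero _

lemma eps_swap (i j : Fin 4) : ε j * ε i = -(ε i * ε j) := by
  have h := ExteriorAlgebra.ι_add_mul_swap (R := ℝ) (Pi.single i (1:ℝ) : V4) (Pi.single j 1)
  unfold ε
  linear_combination (norm := noncomm_ring) h

set_option maxHeartbeats 1600000

/-- For smooth `S¹`-invariant (`y₂`-independent) `u` and `α = -J₀ du - u e¹`, the
2-form `dα` has the stated expression and is of type `(1,1)` with respect to `J₀`. -/
theorem stmt_9 (u : V4 → ℝ) (hu : ContDiff ℝ (⊤ : ℕ∞) u)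
    (hinv : ∀ (p : V4) (t : ℝ), u (Function.update p 3 t) = u p)
    (α : V4 → Fin 4 → ℝ)
    (hα : ∀ p : V4, α p = -(J0c (dc u) p) - u p • (Pi.single (0 : Fin 4) (1 : ℝ) : V4))
    (p : V4) :
    d1 α p =
      pd2 0 0 u p • (ε 0 * ε 2) + pd2 0 1 u p • (ε 0 * f2 p) +
        pd2 1 0 u p • (ε 1 * ε 2) + pd2 1 1 u p • (ε 1 * f2 p) +
        pd2 1 2 u p • (ε 0 * ε 1) + pd2 1 2 u p • (ε 2 * f2 p) +
        (pd2 2 2 u p + pd 2 u p) • (ε 0 * ε 2) ∧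
    ExteriorAlgebra.map (Matrix.toLin' (J0mat p)) (d1 α p) = d1 α p := by
  have hud : Differentiable ℝ u := hu.differentiable (by simp)
  have hpdC : ∀ j, ContDiff ℝ (⊤ : ℕ∞) (pd j u) := fun j =>
    (hu.fderiv_right (by simp)).clm_apply contDiff_const
  have hpdD : ∀ j q, DifferentiableAt ℝ (pd j u) q := fun j q =>
    ((hpdC j).differentiable (by simp)) q
  -- invariance : `∂₃ u = 0`
  have hpd3 : pd 3 u = fun _ => 0 := by
    funext q
    have hline : (fun t : ℝ => u (q + t • (Pi.single 3 1 : V4))) = fun _ => u q := by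
      funext t
      have h : q + t • (Pi.single 3 1 : V4) = Function.update q 3 (q 3 + t) := by
        funext k
        rcases eq_or_ne k 3 with rfl | hk
        · simp [Function.update]
        · simp [Function.update, hk, Pi.single_apply]
      rw [h, hinv]
    have h2 : HasDerivAt (fun t : ℝ => q + t • (Pi.single 3 1 : V4)) (Pi.single 3 1) 0 := by
      simpa using ((hasDerivAt_id (0:ℝ)).smul_const (Pi.single 3 1 : V4)).const_add q
    have h1 : HasDerivAt (fun t : ℝ => u (q + t • (Pi.single 3 1 : V4)))
        (fderiv ℝ u q (Pi.single 3 1)) 0 := by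
      have h3 : HasFDerivAt u (fderiv ℝ u q) (q + (0:ℝ) • (Pi.single 3 1 : V4)) := by
        simpa using (hud q).hasFDerivAt
      exact h3.comp_hasDerivAt (x := (0:ℝ)) h2
    rw [hline] at h1
    have := h1.unique (hasDerivAt_const _ _)
    simpa [pd] using this
  -- Clairaut symmetry
  have hclair : ∀ (i j : Fin 4) (q : V4), pd2 i j u q = pd2 j i u q := by
    intro i j q
    have hs : IsSymmSndFDerivAt ℝ u q := hu.contDiffAt.isSymmSndFDerivAt (by rw [minSmoothness_of_isRCLikeNormedField]; exact WithTop.coe_le_coe.mpr le_top)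
    have hdd : DifferentiableAt ℝ (fderiv ℝ u) q :=
      ((hu.fderiv_right (m := (⊤ : ℕ∞)) (by simp)).differentiable (by simp)) q
    have key : ∀ k l : Fin 4, pd2 k l u q
        = fderiv ℝ (fderiv ℝ u) q (Pi.single k 1) (Pi.single l 1) := by
      intro k l
      unfold pd2 pd
      rw [fderiv_clm_apply hdd (differentiableAt_const _)]
      simp
    rw [key, key, hs.eq]
  -- mixed partials with `∂₃` vanish
  have hz : ∀ j : Fin 4, pd2 3 j u p = 0 := by
    intro j
    rw [hclair 3 j p]
    unfold pd2
    rw [hpd3]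
    simp [pd]
  -- the components of α
  have hα0 : (fun q => α q 0) = fun q => -(pd 2 u q) - u q := by
    funext q; rw [hα q]
    simp [J0c, J0mat, dc, Matrix.mulVec, dotProduct, Fin.sum_univ_four, hpd3,
      Pi.single_apply]
  have hα1 : (fun q => α q 1) = fun q => -(q 0 * pd 1 u q) := by
    funext q; rw [hα q]
    simp [J0c, J0mat, dc, Matrix.mulVec, dotProduct, Fin.sum_univ_four, hpd3,
      Pi.single_apply]
  have hα2 : (fun q => α q 2) = pd 0 u := by
    funext q; rw [hα q]
    simp [J0c, J0mat, dc, Matrix.mulVec, dotProduct, Fin.sum_univ_four, hpd3,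
      Pi.single_apply]
  have hα3 : (fun q => α q 3) = pd 1 u := by
    funext q; rw [hα q]
    simp [J0c, J0mat, dc, Matrix.mulVec, dotProduct, Fin.sum_univ_four, hpd3,
      Pi.single_apply]
  -- derivatives of the components
  have hd0 : ∀ i : Fin 4, pd i (fun q => α q 0) p = -(pd2 i 2 u p) - pd i u p := by
    intro i
    rw [hα0]
    rw [show pd i (fun q => -(pd 2 u q) - u q) p
        = fderiv ℝ (fun q => -(pd 2 u q) - u q) p (Pi.single i 1) from rfl]
    rw [fderiv_fun_sub (f := fun q => -(pd 2 u q)) ((hpdD 2 p).neg) (hud p), fderiv_fun_neg]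
    simp [pd2, pd]
  have hd1 : ∀ i : Fin 4, pd i (fun q => α q 1) p
      = -(p 0 * pd2 i 1 u p + pd 1 u p * (Pi.single i 1 : V4) 0) := by
    intro i
    rw [hα1]
    rw [show pd i (fun q => -(q 0 * pd 1 u q)) p
        = fderiv ℝ (fun q => -(q 0 * pd 1 u q)) p (Pi.single i 1) from rfl]
    have hc : DifferentiableAt ℝ (fun q : V4 => q 0) p :=
      (ContinuousLinearMap.proj (R := ℝ) (φ := fun _ : Fin 4 => ℝ) 0).differentiableAt
    have hfc : fderiv ℝ (fun q : V4 => q 0) p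
        = ContinuousLinearMap.proj (R := ℝ) (φ := fun _ : Fin 4 => ℝ) 0 :=
      (ContinuousLinearMap.proj (R := ℝ) (φ := fun _ : Fin 4 => ℝ) 0).fderiv
    rw [fderiv_fun_neg, fderiv_fun_mul hc (hpdD 1 p), hfc]
    simp [pd2, pd]
  have hd2 : ∀ i : Fin 4, pd i (fun q => α q 2) p = pd2 i 0 u p := by
    intro i; rw [hα2]; rfl
  have hd3 : ∀ i : Fin 4, pd i (fun q => α q 3) p = pd2 i 1 u p := by
    intro i; rw [hα3]; rfl
  have h10 : ε 1 * ε 0 = -(ε 0 * ε 1) := eps_swap 0 1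
  have h20 : ε 2 * ε 0 = -(ε 0 * ε 2) := eps_swap 0 2
  have h21 : ε 2 * ε 1 = -(ε 1 * ε 2) := eps_swap 1 2
  have h30 : ε 3 * ε 0 = -(ε 0 * ε 3) := eps_swap 0 3
  have h31 : ε 3 * ε 1 = -(ε 1 * ε 3) := eps_swap 1 3
  have h32 : ε 3 * ε 2 = -(ε 2 * ε 3) := eps_swap 2 3
  have hmain : d1 α p =
      pd2 0 0 u p • (ε 0 * ε 2) + pd2 0 1 u p • (ε 0 * f2 p) +
        pd2 1 0 u p • (ε 1 * ε 2) + pd2 1 1 u p • (ε 1 * f2 p) +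
        pd2 1 2 u p • (ε 0 * ε 1) + pd2 1 2 u p • (ε 2 * f2 p) +
        (pd2 2 2 u p + pd 2 u p) • (ε 0 * ε 2) := by
    unfold d1
    simp only [Fin.sum_univ_four]
    rw [hd0 0, hd0 1, hd0 2, hd0 3, hd1 0, hd1 1, hd1 2, hd1 3]
    simp only [hd2, hd3, hclair 2 1 p, hz, hpd3, f2, mul_sub, smul_sub, mul_smul_comm, smul_smul,
      Pi.single_apply,
      show ((0:Fin 4) = 0) = True by simp, show ((0:Fin 4) = 1) = False by decide,
      show ((0:Fin 4) = 2) = False by decide, show ((0:Fin 4) = 3) = False by decide,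
      if_true, if_false, mul_zero, mul_one, add_zero, zero_add,
      eps_sq, smul_zero, h10, h20, h21, h30, h31, h32, smul_neg, neg_neg]
    module
  refine ⟨hmain, ?_⟩
  -- the (1,1) property
  have hm0 : ExteriorAlgebra.map (Matrix.toLin' (J0mat p)) (ε 0) = -(ε 2) := by
    unfold ε
    rw [ExteriorAlgebra.map_apply_ι]
    have : (Matrix.toLin' (J0mat p)) (Pi.single 0 1 : V4) = -(Pi.single 2 1 : V4) := by
      funext k
      fin_cases k <;>
        simp [Matrix.toLin'_apply, Matrix.mulVec, dotProduct, J0mat,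
          Fin.sum_univ_four, Pi.single_apply]
    rw [this, map_neg]
  have hm1 : ExteriorAlgebra.map (Matrix.toLin' (J0mat p)) (ε 1) = p 0 • ε 1 - ε 3 := by
    unfold ε
    rw [ExteriorAlgebra.map_apply_ι]
    have : (Matrix.toLin' (J0mat p)) (Pi.single 1 1 : V4)
        = p 0 • (Pi.single 1 1 : V4) - (Pi.single 3 1 : V4) := by
      funext k
      fin_cases k <;>
        simp [Matrix.toLin'_apply, Matrix.mulVec, dotProduct, J0mat,
          Fin.sum_univ_four, Pi.single_apply]
    rw [this, map_sub, map_smul]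
  have hm2 : ExteriorAlgebra.map (Matrix.toLin' (J0mat p)) (ε 2) = ε 0 := by
    unfold ε
    rw [ExteriorAlgebra.map_apply_ι]
    congr 1
    funext k
    fin_cases k <;>
      simp [Matrix.toLin'_apply, Matrix.mulVec, dotProduct, J0mat,
        Fin.sum_univ_four, Pi.single_apply]
  have hm3 : ExteriorAlgebra.map (Matrix.toLin' (J0mat p)) (ε 3)
      = (1 + p 0 ^ 2) • ε 1 - p 0 • ε 3 := by
    unfold ε
    rw [ExteriorAlgebra.map_apply_ι]
    have : (Matrix.toLin' (J0mat p)) (Pi.single 3 1 : V4)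
        = (1 + p 0 ^ 2) • (Pi.single 1 1 : V4) - p 0 • (Pi.single 3 1 : V4) := by
      funext k
      fin_cases k <;>
        simp [Matrix.toLin'_apply, Matrix.mulVec, dotProduct, J0mat,
          Fin.sum_univ_four, Pi.single_apply]
    rw [this, map_sub, map_smul, map_smul]
  rw [hmain, hclair 1 0 p]
  simp only [f2, map_add, map_smul, map_mul, map_sub, hm0, hm1, hm2, hm3]
  simp only [mul_sub, sub_mul, smul_sub, smul_mul_assoc, mul_smul_comm, smul_smul,
    neg_mul, mul_neg, smul_neg, neg_neg, eps_sq, smul_zero, h10, h20, h21, h30, h31, h32]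
  module
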